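/- arXiv:2409.13087 — 2 statements merged into one kernel-verified Lean document; each statement's English description precedes it below -/
import Mathlib

section
/- For every integer n ≥ 2, h_2(n) = Σ_{k=1}^{⌊(n+1)/3⌋} C(2k−1, k) · C(n−2k, k−1), where C denotes the binomial coefficient. -/
/-- The score of a binary sequence `x` of length `n` (indices `0,…,n-1`, with `true` = heads = 1
and `false` = tails = 0): the number of consecutive pairs `(1,1)` minus the number of
consecutive pairs `(1,0)`. -/
def scoreSeq (n : ℕ) (x : Fin n → Bool) : ℤ :=
  ((Finset.univ.filter fun i : Fin (n - 1) =>
      x ⟨i.val, by have := i.isLt; omega⟩ = true ∧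
      x ⟨i.val + 1, by have := i.isLt; omega⟩ = true).card : ℤ) -
  ((Finset.univ.filter fun i : Fin (n - 1) =>
      x ⟨i.val, by have := i.isLt; omega⟩ = true ∧
      x ⟨i.val + 1, by have := i.isLt; omega⟩ = false).card : ℤ)

/-- `Hcnt n s` : the number of binary `n`-sequences ending in 1 (heads) with score `s`. -/
def Hcnt (n : ℕ) (s : ℤ) : ℕ :=
  (Finset.univ.filter fun x : Fin n → Bool =>
    (∀ i : Fin n, (i : ℕ) = n - 1 → x i = true) ∧ scoreSeq n x = s).card

/-- `h2 n` : the number of binary `n`-sequences ending in 1 with score `1`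
(heady close-call wins for Alice). -/
def h2 (n : ℕ) : ℕ := Hcnt n 1

/-!
Let `u` and `d` count the pairs `(1,1)` and `(1,0)` of a sequence, so that its score is `u - d`.
The number of sequences of length `m + 1` ending in a given coin with given `u` and `d` has a
closed form (a product of two binomial coefficients, counting the compositions of the heads into
runs and of the tails into the gaps between them). We verify it through the recursion obtained by
deleting the last coin, which couples sequences ending in `1` with those ending in `0`.
Score `1` means `u = d + 1`; summing the closed form over `d` gives `h₂`, with `k = d + 1`.
-/

open Finset

def pairCount (n : ℕ) (x : Fin n → Bool) (b : Bool) : ℕ :=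
  (Finset.univ.filter fun i : Fin (n - 1) =>
      x ⟨i.val, by have := i.isLt; omega⟩ = true ∧
      x ⟨i.val + 1, by have := i.isLt; omega⟩ = b).card

lemma scoreSeq_eq_pairCount_sub (n : ℕ) (x : Fin n → Bool) :
    scoreSeq n x = (pairCount n x true : ℤ) - pairCount n x false := rfl

lemma pairCount_le (m : ℕ) (x : Fin (m + 1) → Bool) (b : Bool) : pairCount (m + 1) x b ≤ m :=
  (card_filter_le _ _).trans_eq (by simp)

lemma pairCount_zero (x : Fin 1 → Bool) (b : Bool) : pairCount 1 x b = 0 := by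
  simp [pairCount]

lemma pairCount_snoc (m : ℕ) (x : Fin (m + 1) → Bool) (b c : Bool) :
    pairCount (m + 2) (Fin.snoc x b) c
      = pairCount (m + 1) x c + if x (Fin.last m) = true ∧ b = c then 1 else 0 := by
  have eq_sum : ∀ (k : ℕ) (y : Fin (k + 1) → Bool), pairCount (k + 1) y c
      = ∑ i : Fin k, if y i.castSucc = true ∧ y i.succ = c then 1 else 0 := fun k y =>
    card_filter _ _
  rw [eq_sum, eq_sum, Fin.sum_univ_castSucc]
  simp only [Fin.succ_castSucc, Fin.snoc_castSucc, Fin.succ_last, Fin.snoc_last]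

lemma card_filter_last_eq {α : Type*} [Fintype α] [DecidableEq α] (m : ℕ) (c : α)
    (p : (Fin (m + 1) → α) → Prop) [DecidablePred p] :
    #{x | x (Fin.last m) = c ∧ p x} = #{y : Fin m → α | p (Fin.snoc y c)} := by
  refine card_bij' (fun x _ => Fin.init x) (fun y _ => Fin.snoc y c) ?_ ?_ ?_ ?_
  · intro x hx
    simp only [mem_filter, mem_univ, true_and] at hx ⊢
    rw [← hx.1, Fin.snoc_init_self]; exact hx.2
  · intro y hy
    simpa using hy
  · intro x hx
    simp only [mem_filter, mem_univ, true_and] at hx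
    rw [← hx.1, Fin.snoc_init_self]
  · intro y _
    exact Fin.init_snoc _ _

def seqCount (m : ℕ) (c : Bool) (u d : ℕ) : ℕ :=
  #{x : Fin (m + 1) → Bool |
    x (Fin.last m) = c ∧ pairCount (m + 1) x true = u ∧ pairCount (m + 1) x false = d}

lemma seqCount_zero (c : Bool) (u d : ℕ) :
    seqCount 0 c u d = if u = 0 ∧ d = 0 then 1 else 0 := by
  rw [seqCount, card_filter_last_eq]
  split_ifs <;> simp [pairCount_zero, eq_comm, *]

lemma seqCount_succ (m : ℕ) (c : Bool) (u d : ℕ) :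
    seqCount (m + 1) c u d =
      #{y : Fin (m + 1) → Bool | y (Fin.last m) = true ∧
        pairCount (m + 1) y true + c.toNat = u ∧ pairCount (m + 1) y false + (!c).toNat = d} +
      seqCount m false u d := by
  rw [seqCount, card_filter_last_eq, ← card_filter_add_card_filter_not
    (fun y : Fin (m + 1) → Bool => y (Fin.last m) = true), filter_filter, filter_filter, seqCount]
  congr 2 <;> ext y <;> cases hy : y (Fin.last m) <;> cases c <;> simp [pairCount_snoc, hy]

lemma seqCount_succ_true_zero (m d : ℕ) : seqCount (m + 1) true 0 d = seqCount m false 0 d := by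
  simp [seqCount_succ]

lemma seqCount_succ_true_succ (m u d : ℕ) :
    seqCount (m + 1) true (u + 1) d = seqCount m true u d + seqCount m false (u + 1) d := by
  rw [seqCount_succ]
  simp [seqCount]

lemma seqCount_succ_false_zero (m u : ℕ) : seqCount (m + 1) false u 0 = seqCount m false u 0 := by
  simp [seqCount_succ]

lemma seqCount_succ_false_succ (m u d : ℕ) :
    seqCount (m + 1) false u (d + 1) = seqCount m true u d + seqCount m false u (d + 1) := by
  rw [seqCount_succ]
  simp [seqCount]

/- Ending in `1`, a sequence has `d + 1` runs of heads holding `u + d + 1` heads, and `m - (u + d)`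
tails filling the `d` gaps between runs and a possibly empty initial block. Ending in `0` with
`d + 1` pairs `(1,0)`, it has `d + 1` runs holding `u + d + 1` heads, and its `m - (u + d)` tails
also fill a nonempty final block. -/
def seqCountFormula (m : ℕ) : Bool → ℕ → ℕ → ℕ
  | true, u, d => if u + d ≤ m then (u + d).choose d * (m - (u + d)).choose d else 0
  | false, u, 0 => if u = 0 then 1 else 0
  | false, u, d + 1 => (u + d).choose d * (m - (u + d)).choose (d + 1)

lemma seqCountFormula_succ_true_zero (m d : ℕ) :
    seqCountFormula (m + 1) true 0 d = seqCountFormula m false 0 d := by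
  rcases d with _ | d
  · simp [seqCountFormula]
  simp only [seqCountFormula]
  split_ifs <;> grind

lemma seqCountFormula_succ_true_succ (m u d : ℕ) :
    seqCountFormula (m + 1) true (u + 1) d
      = seqCountFormula m true u d + seqCountFormula m false (u + 1) d := by
  rcases d with _ | d
  · simp [seqCountFormula]
  simp only [seqCountFormula]
  split_ifs <;> grind [Nat.choose_succ_succ']

lemma seqCountFormula_succ_false_zero (m u : ℕ) :
    seqCountFormula (m + 1) false u 0 = seqCountFormula m false u 0 := rfl

lemma seqCountFormula_succ_false_succ (m u d : ℕ) :
    seqCountFormula (m + 1) false u (d + 1)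
      = seqCountFormula m true u d + seqCountFormula m false u (d + 1) := by
  simp only [seqCountFormula]
  split_ifs with h
  · rw [Nat.sub_add_comm h, Nat.choose_succ_succ', mul_add]
  · grind

theorem seqCount_eq_formula (m : ℕ) (c : Bool) (u d : ℕ) :
    seqCount m c u d = seqCountFormula m c u d := by
  induction m generalizing c u d with
  | zero =>
    rw [seqCount_zero]
    cases c <;> rcases d with _ | d <;> simp [seqCountFormula]
  | succ m ih =>
    cases c
    · rcases d with _ | d
      · rw [seqCount_succ_false_zero, ih, seqCountFormula_succ_false_zero]
      · rw [seqCount_succ_false_succ, ih, ih, seqCountFormula_succ_false_succ]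
    · rcases u with _ | u
      · rw [seqCount_succ_true_zero, ih, seqCountFormula_succ_true_zero]
      · rw [seqCount_succ_true_succ, ih, ih, seqCountFormula_succ_true_succ]

lemma h2_succ_eq_sum_seqCount (m : ℕ) :
    h2 (m + 1) = ∑ d ∈ range (m + 1), seqCount m true (d + 1) d := by
  rw [h2, Hcnt, card_eq_sum_card_fiberwise (f := fun x => pairCount (m + 1) x false)
    (t := range (m + 1)) fun x _ => mem_range.2 (Nat.lt_succ_of_le (pairCount_le m x false))]
  refine sum_congr rfl fun d _ => ?_
  rw [seqCount, filter_filter]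
  congr 1
  refine filter_congr fun x _ => ?_
  have last_iff : (∀ i : Fin (m + 1), (i : ℕ) = m + 1 - 1 → x i = true) ↔ x (Fin.last m) = true :=
    ⟨fun h => h _ rfl, fun h i hi => (Fin.ext hi : i = Fin.last m) ▸ h⟩
  rw [last_iff, scoreSeq_eq_pairCount_sub, and_assoc]
  refine and_congr_right fun _ => ?_
  omega

lemma seqCountFormula_true_succ_self (m d : ℕ) :
    seqCountFormula m true (d + 1) d
      = if 3 * d + 1 ≤ m then (2 * d + 1).choose (d + 1) * (m - (2 * d + 1)).choose d else 0 := by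
  simp only [seqCountFormula, show d + 1 + d = 2 * d + 1 by ring, Nat.choose_symm_half]
  split_ifs <;> grind

theorem h2_formula_general (n : ℕ) :
    h2 n = ∑ k ∈ Finset.Icc 1 ((n + 1) / 3),
      Nat.choose (2 * k - 1) k * Nat.choose (n - 2 * k) (k - 1) := by
  rcases n with _ | m
  · rfl
  rw [h2_succ_eq_sum_seqCount, ← Ico_add_one_right_eq_Icc, sum_Ico_eq_sum_range,
    Nat.add_sub_cancel, ← sum_subset (range_subset_range.2 (by omega : (m + 1 + 1) / 3 ≤ m + 1))]
  · refine sum_congr rfl fun d hd => ?_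
    rw [mem_range] at hd
    rw [seqCount_eq_formula, seqCountFormula_true_succ_self, if_pos (by omega)]
    congr 2 <;> omega
  · intro d _ hd
    rw [mem_range] at hd
    rw [seqCount_eq_formula, seqCountFormula_true_succ_self, if_neg (by omega)]

/-- Corollary to Lemma 2: for every `n ≥ 2`,
`h₂(n) = ∑_{k=1}^{⌊(n+1)/3⌋} C(2k−1, k) · C(n−2k, k−1)`. -/
theorem h2_formula (n : ℕ) (hn : 2 ≤ n) :
    h2 n = ∑ k ∈ Finset.Icc 1 ((n + 1) / 3),
      Nat.choose (2 * k - 1) k * Nat.choose (n - 2 * k) (k - 1) :=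
  h2_formula_general n
end

section
/- Let n ≥ 1 and let s be an integer with −⌊n/2⌋ ≤ s ≤ max(0, n−3). Then T_s(n) = [s = 0] + Σ_{k = max(1, −s)}^{⌊(n−s)/3⌋} C(2k+s−1, k−1) · C(n−s−2k, k), where [s = 0] is 1 if s = 0 and 0 otherwise, and C denotes the binomial coefficient. -/
/-- `Tcnt n s` : the number of binary `n`-sequences ending in 0 (tails) with score `s`. -/
def Tcnt (n : ℕ) (s : ℤ) : ℕ :=
  (Finset.univ.filter fun x : Fin n → Bool =>
    (∀ i : Fin n, (i : ℕ) = n - 1 → x i = false) ∧ scoreSeq n x = s).card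

open Finset

def pairScore : Bool → Bool → ℤ
  | true, true => 1
  | true, false => -1
  | false, _ => 0

lemma scoreSeq_eq_sum (n : ℕ) (x : Fin (n + 1) → Bool) :
    scoreSeq (n + 1) x = ∑ i : Fin n, pairScore (x i.castSucc) (x i.succ) := by
  simp only [scoreSeq, card_filter, Nat.cast_sum, Nat.cast_ite, Nat.cast_one, Nat.cast_zero,
    ← sum_sub_distrib]
  refine sum_congr rfl fun i _ => ?_
  cases h₁ : x i.castSucc <;> cases h₂ : x i.succ <;>
    simp_all [pairScore, Fin.castSucc, Fin.succ, Fin.castAdd, Fin.castLE]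

lemma scoreSeq_snoc (n : ℕ) (y : Fin (n + 1) → Bool) (b : Bool) :
    scoreSeq (n + 2) (Fin.snoc y b) = scoreSeq (n + 1) y + pairScore (y (Fin.last n)) b := by
  rw [scoreSeq_eq_sum, scoreSeq_eq_sum, Fin.sum_univ_castSucc]
  simp only [Fin.snoc_castSucc, Fin.succ_castSucc, Fin.succ_last, Fin.snoc_last]

def endCount (n : ℕ) (b : Bool) (s : ℤ) : ℕ :=
  #{x : Fin n → Bool | (∀ i : Fin n, (i : ℕ) = n - 1 → x i = b) ∧ scoreSeq n x = s}

lemma Tcnt_eq_endCount (n : ℕ) (s : ℤ) : Tcnt n s = endCount n false s := rfl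

lemma endCount_succ (n : ℕ) (b : Bool) (s : ℤ) :
    endCount (n + 1) b s =
      #{x : Fin (n + 1) → Bool | x (Fin.last n) = b ∧ scoreSeq (n + 1) x = s} := by
  have hlast (x : Fin (n + 1) → Bool) :
      (∀ i : Fin (n + 1), (i : ℕ) = n + 1 - 1 → x i = b) ↔ x (Fin.last n) = b :=
    ⟨fun h => h _ rfl, fun h i hi => (Fin.ext hi : i = Fin.last n) ▸ h⟩
  simp only [endCount, hlast]

lemma endCount_one (b : Bool) (s : ℤ) : endCount 1 b s = if s = 0 then 1 else 0 := by
  have h0 (x : Fin 1 → Bool) : scoreSeq 1 x = 0 := by simp [scoreSeq_eq_sum]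
  rw [endCount_succ]
  split_ifs with hs
  · rw [card_eq_one]
    refine ⟨fun _ => b, ?_⟩
    ext x
    simp [h0, hs, funext_iff, Fin.forall_fin_one]
  · rw [card_eq_zero, filter_eq_empty_iff]
    exact fun x _ ⟨_, hx⟩ => hs (hx ▸ (h0 x).symm)

lemma endCount_succ_succ (n : ℕ) (b : Bool) (s : ℤ) :
    endCount (n + 2) b s =
      endCount (n + 1) false s + endCount (n + 1) true (s - pairScore true b) := by
  have hsnoc : endCount (n + 2) b s =
      #{y : Fin (n + 1) → Bool | scoreSeq (n + 2) (Fin.snoc y b) = s} := by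
    rw [endCount_succ]
    refine card_nbij' Fin.init (Fin.snoc · b) ?_ ?_ ?_ ?_
    all_goals
      intro x hx
      simp only [coe_filter, Set.mem_ofPred_eq, mem_univ, true_and] at hx ⊢
    · rw [← hx.1, Fin.snoc_init_self]; exact hx.2
    · exact ⟨Fin.snoc_last _ _, hx⟩
    · rw [← hx.1, Fin.snoc_init_self]
    · exact Fin.init_snoc _ _
  rw [hsnoc, endCount_succ, endCount_succ, ← card_filter_add_card_filter_not
    (fun y : Fin (n + 1) → Bool => y (Fin.last n) = false), filter_filter, filter_filter]
  congr 1 <;> congr 1 <;> ext y <;> simp only [mem_filter, mem_univ, true_and, scoreSeq_snoc] <;>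
    cases y (Fin.last n) <;> cases b <;> simp [pairScore] <;> omega

/-- `C(a, k)` for an integer `a`, taken to be `0` when `a < 0` (unlike `Ring.choose`);
Pascal's rule still holds for every `a`. -/
def intChoose : ℤ → ℕ → ℕ
  | (m : ℕ), k => m.choose k
  | Int.negSucc _, _ => 0

lemma intChoose_toNat {a : ℤ} (ha : 0 ≤ a) (k : ℕ) : intChoose a k = a.toNat.choose k := by
  lift a to ℕ using ha; rfl

lemma intChoose_eq_zero_of_lt {a : ℤ} {k : ℕ} (h : a < k) : intChoose a k = 0 := by
  cases a with
  | ofNat m => exact Nat.choose_eq_zero_of_lt (Int.ofNat_lt.mp h)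
  | negSucc m => rfl

lemma intChoose_zero_right (a : ℤ) : intChoose a 0 = if 0 ≤ a then 1 else 0 := by
  rcases a with m | m <;> simp [intChoose]

lemma intChoose_succ_right (a : ℤ) (k : ℕ) :
    intChoose a (k + 1) = intChoose (a - 1) k + intChoose (a - 1) (k + 1) := by
  rcases a with (_ | m) | m
  · rfl
  · rw [Int.ofNat_eq_natCast, Nat.cast_succ, add_sub_cancel_right]
    exact Nat.choose_succ_succ m k
  · rfl

/-- A sequence ending in tails with `j + 1` runs of heads and score `s` has `2j + s + 2` heads,
cut into `j + 1` nonempty runs, each placed right before one of the `n - s - 2j - 2` tails. -/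
def tailsTerm (n : ℕ) (s : ℤ) (j : ℕ) : ℕ :=
  intChoose (2 * j + s + 1) j * intChoose (n - s - 2 * j - 2) (j + 1)

/-- A sequence ending in heads with `j + 1` runs of heads and score `s` has `2j + s + 1` heads;
the last run closes the sequence, each other one is placed right before one of the
`n - s - 2j - 1` tails. -/
def headsTerm (n : ℕ) (s : ℤ) (j : ℕ) : ℕ :=
  intChoose (2 * j + s) j * intChoose (n - s - 2 * j - 1) j

lemma tailsTerm_succ (n : ℕ) (s : ℤ) (j : ℕ) :
    tailsTerm (n + 1) s j = tailsTerm n s j + headsTerm n (s + 1) j := by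
  simp only [tailsTerm, headsTerm]
  push_cast
  rw [intChoose_succ_right, add_comm (intChoose _ j), mul_add]
  ring_nf

lemma headsTerm_succ_zero (n : ℕ) (s : ℤ) :
    headsTerm (n + 1) s 0 = headsTerm n (s - 1) 0 + if s = 0 then 1 else 0 := by
  simp only [headsTerm, intChoose_zero_right]
  push_cast
  split_ifs <;> omega

lemma headsTerm_succ_succ (n : ℕ) (s : ℤ) (j : ℕ) :
    headsTerm (n + 1) s (j + 1) = headsTerm n (s - 1) (j + 1) + tailsTerm n s j := by
  simp only [tailsTerm, headsTerm]
  push_cast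
  rw [intChoose_succ_right, add_mul]
  ring_nf

lemma tailsTerm_eq_zero {n j : ℕ} (h : n ≤ j) (s : ℤ) : tailsTerm n s j = 0 := by
  rw [tailsTerm, mul_eq_zero]
  rcases lt_or_ge (2 * (j : ℤ) + s + 1) j with hs | hs
  · exact .inl (intChoose_eq_zero_of_lt hs)
  · exact .inr (intChoose_eq_zero_of_lt (by push_cast; omega))

lemma headsTerm_eq_zero {n j : ℕ} (h : n ≤ j) (s : ℤ) : headsTerm n s j = 0 := by
  rw [headsTerm, mul_eq_zero]
  rcases lt_or_ge (2 * (j : ℤ) + s) j with hs | hs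
  · exact .inl (intChoose_eq_zero_of_lt hs)
  · exact .inr (intChoose_eq_zero_of_lt (by omega))

def tailsFormula (n : ℕ) (s : ℤ) : ℕ :=
  (if s = 0 then 1 else 0) + ∑ j ∈ range n, tailsTerm n s j

def headsFormula (n : ℕ) (s : ℤ) : ℕ := ∑ j ∈ range n, headsTerm n s j

lemma tailsFormula_succ (n : ℕ) (s : ℤ) :
    tailsFormula (n + 1) s = tailsFormula n s + headsFormula n (s + 1) := by
  simp only [tailsFormula, headsFormula, sum_range_succ _ n, tailsTerm_succ, sum_add_distrib,
    tailsTerm_eq_zero le_rfl, headsTerm_eq_zero le_rfl]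
  ring

lemma headsFormula_succ (n : ℕ) (s : ℤ) :
    headsFormula (n + 1) s = tailsFormula n s + headsFormula n (s - 1) := by
  have hshift : ∑ j ∈ range n, headsTerm n (s - 1) (j + 1) + headsTerm n (s - 1) 0 =
      ∑ j ∈ range n, headsTerm n (s - 1) j := by
    rw [← sum_range_succ', sum_range_succ, headsTerm_eq_zero le_rfl, add_zero]
  simp only [tailsFormula, headsFormula, sum_range_succ' _ n, headsTerm_succ_succ,
    headsTerm_succ_zero, sum_add_distrib, ← hshift]
  ring

lemma sum_Icc_eq_sum_tailsTerm (n : ℕ) (s : ℤ) :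
    ∑ k ∈ Icc (max 1 (-s).toNat) (((n : ℤ) - s).toNat / 3),
        (2 * (k : ℤ) + s - 1).toNat.choose (k - 1) * (((n : ℤ) - s).toNat - 2 * k).choose k =
      ∑ j ∈ range n, tailsTerm n s j := by
  rw [range_eq_Ico, ← sum_Ico_add_right_sub_eq (c := 1)]
  refine sum_subset_zero_on_sdiff ?_ ?_ ?_
  · intro k hk
    simp only [mem_Icc, mem_Ico] at hk ⊢
    omega
  · intro k hk
    simp only [mem_sdiff, mem_Icc, mem_Ico] at hk
    obtain ⟨j, rfl⟩ : ∃ j, k = j + 1 := ⟨k - 1, by omega⟩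
    rw [Nat.add_sub_cancel, tailsTerm, mul_eq_zero]
    rcases lt_or_ge (j + 1 : ℤ) (-s) with hs | hs
    · exact .inl (intChoose_eq_zero_of_lt (by omega))
    · exact .inr (intChoose_eq_zero_of_lt (by push_cast; omega))
  · intro k hk
    simp only [mem_Icc] at hk
    obtain ⟨j, rfl⟩ : ∃ j, k = j + 1 := ⟨k - 1, by omega⟩
    rw [Nat.add_sub_cancel, tailsTerm, intChoose_toNat (by omega), intChoose_toNat (by omega)]
    congr 3 <;> omega

def closedForm (n : ℕ) : Bool → ℤ → ℕ
  | false => tailsFormula n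
  | true => headsFormula n

lemma closedForm_succ (n : ℕ) (b : Bool) (s : ℤ) :
    closedForm (n + 1) b s = closedForm n false s + closedForm n true (s - pairScore true b) := by
  cases b
  · simp only [closedForm, tailsFormula_succ, pairScore, sub_neg_eq_add]
  · exact headsFormula_succ n s

lemma endCount_eq_closedForm (n : ℕ) (hn : 1 ≤ n) (b : Bool) (s : ℤ) :
    endCount n b s = closedForm n b s := by
  induction n, hn using Nat.le_induction generalizing b s with
  | base =>
    rw [endCount_one, closedForm_succ]
    simp [closedForm, tailsFormula, headsFormula]
  | succ n hn ih =>
    obtain ⟨m, rfl⟩ : ∃ m, n = m + 1 := ⟨n - 1, by omega⟩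
    rw [endCount_succ_succ, ih, ih, closedForm_succ (m + 1)]

theorem T_formula_general (n : ℕ) (hn : 1 ≤ n) (s : ℤ) :
    Tcnt n s = (if s = 0 then 1 else 0) +
      ∑ k ∈ Finset.Icc (max 1 (-s).toNat) (((n : ℤ) - s).toNat / 3),
        Nat.choose (2 * (k : ℤ) + s - 1).toNat (k - 1) *
          Nat.choose (((n : ℤ) - s).toNat - 2 * k) k := by
  rw [Tcnt_eq_endCount, endCount_eq_closedForm n hn, closedForm, tailsFormula,
    sum_Icc_eq_sum_tailsTerm]

/-- Theorem 2, formula (4.3): for `n ≥ 1` and integer `s` with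
`−⌊n/2⌋ ≤ s ≤ max(0, n−3)`,
`T_s(n) = [s = 0] + ∑_{k = max(1,−s)}^{⌊(n−s)/3⌋} C(2k+s−1, k−1) · C(n−s−2k, k)`. -/
theorem T_formula (n : ℕ) (hn : 1 ≤ n) (s : ℤ)
    (hs1 : -((n / 2 : ℕ) : ℤ) ≤ s) (hs2 : s ≤ max 0 ((n : ℤ) - 3)) :
    Tcnt n s = (if s = 0 then 1 else 0) +
      ∑ k ∈ Finset.Icc (max 1 (-s).toNat) (((n : ℤ) - s).toNat / 3),
        Nat.choose (2 * (k : ℤ) + s - 1).toNat (k - 1) *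
          Nat.choose (((n : ℤ) - s).toNat - 2 * k) k :=
  T_formula_general n hn s
end
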